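/- Let H₁ = (1,0,0,0), H₂ = (1, 0, 2√3/7, 1/7), H₃ = (1, 2√3/7, 0, 1/7) in ℝ⁴, and for i ≠ j set d_{ij} = arccosh( −⟨H_i,H_j⟩ / √(⟨H_i,H_i⟩⟨H_j,H_j⟩) ) and L_{ij} = 2 sinh(d_{ij}/2). Then cosh d_{12} = cosh d_{13} = 7/6 and cosh d_{23} = 4/3, hence L_{12} = L_{13} = 1/√3 and L_{23} = √(2/3); these satisfy L_{12}² + L_{13}² = L_{23}², and the Euclidean area of a triangle with side lengths 1/√3, 1/√3, √(2/3) is 1/6. (Hence the maximal horoball piece in the fundamental simplex of the Coxeter tiling [3,4,4] has hyperbolic volume 1/12.) -/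

import Mathlib

open Real

/-- The Lorentzian bilinear form `⟨x,y⟩ = −x⁰y⁰ + x¹y¹ + x²y² + x³y³` on `ℝ⁴`. -/
def lor (x y : Fin 4 → ℝ) : ℝ :=
  -(x 0 * y 0) + x 1 * y 1 + x 2 * y 2 + x 3 * y 3

/-- Inverse hyperbolic cosine. -/
noncomputable def arcosh (x : ℝ) : ℝ := Real.log (x + Real.sqrt (x ^ 2 - 1))

/-- Heron's formula for the Euclidean area of a triangle with side lengths `a, b, c`. -/
noncomputable def heronArea (a b c : ℝ) : ℝ :=
  (1 / 4) * Real.sqrt ((a + b + c) * (-a + b + c) * (a - b + c) * (a + b - c))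

/-!
Bolyai's length `2 sinh (d / 2)` is `√(2 (cosh d - 1))` by the half-angle formula, so the values
`cosh d = 7/6, 7/6, 4/3` read off from the Lorentz form give `1/√3, 1/√3, √(2/3)`. As
`1/3 + 1/3 = 2/3` the horospherical triangle is right-angled, and Heron's formula for a right
triangle is half the product of the legs, `1/6`.
-/

theorem arcosh_eq_real_arcosh : _root_.arcosh = Real.arcosh := rfl

theorem two_mul_sinh_half {t : ℝ} (ht : 0 ≤ t) : 2 * sinh (t / 2) = √(2 * (cosh t - 1)) := by
  have half_angle : 2 * (cosh t - 1) = (2 * sinh (t / 2)) ^ 2 := by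
    rw [← mul_div_cancel₀ t (two_ne_zero' ℝ), cosh_two_mul, cosh_sq]
    ring_nf
  rw [half_angle, sqrt_sq (mul_nonneg zero_le_two (sinh_nonneg_iff.2 (by positivity)))]

theorem two_mul_sinh_half_arcosh {x : ℝ} (hx : 1 ≤ x) :
    2 * sinh (Real.arcosh x / 2) = √(2 * (x - 1)) := by
  rw [two_mul_sinh_half (arcosh_nonneg hx), cosh_arcosh hx]

theorem heronArea_of_sq_add_sq {a b c : ℝ} (ha : 0 ≤ a) (hb : 0 ≤ b) (h : a ^ 2 + b ^ 2 = c ^ 2) :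
    heronArea a b c = a * b / 2 := by
  have heron_product :
      (a + b + c) * (-a + b + c) * (a - b + c) * (a + b - c) = (2 * (a * b)) ^ 2 := by
    linear_combination (-(a ^ 2 + b ^ 2 - c ^ 2)) * h
  rw [heronArea, heron_product, sqrt_sq (by positivity)]
  ring

theorem lor_vecCons (a₀ a₁ a₂ a₃ b₀ b₁ b₂ b₃ : ℝ) :
    lor ![a₀, a₁, a₂, a₃] ![b₀, b₁, b₂, b₃] = -(a₀ * b₀) + a₁ * b₁ + a₂ * b₂ + a₃ * b₃ :=
  rfl

theorem neg_lor_div_sqrt_eq {x y : Fin 4 → ℝ} {a b : ℝ} (ha : 0 ≤ a) (hb : 0 ≤ b)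
    (hx : lor x x = -a ^ 2) (hy : lor y y = -b ^ 2) :
    -lor x y / √(lor x x * lor y y) = -lor x y / (a * b) := by
  rw [hx, hy, neg_mul_neg, ← mul_pow, sqrt_sq (mul_nonneg ha hb)]

/-- For the points `H₁, H₂, H₃` of the Coxeter simplex `[3,4,4]`,
`cosh d₁₂ = cosh d₁₃ = 7/6`, `cosh d₂₃ = 4/3`, the horospherical side lengths are
`1/√3, 1/√3, √(2/3)` satisfying `L₁₂² + L₁₃² = L₂₃²`, and the Euclidean area of a
triangle with these side lengths is `1/6`. -/
theorem horoball_piece_344 :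
    let H₁ : Fin 4 → ℝ := ![1, 0, 0, 0]
    let H₂ : Fin 4 → ℝ := ![1, 0, 2 * Real.sqrt 3 / 7, 1/7]
    let H₃ : Fin 4 → ℝ := ![1, 2 * Real.sqrt 3 / 7, 0, 1/7]
    let d : (Fin 4 → ℝ) → (Fin 4 → ℝ) → ℝ := fun x y =>
      _root_.arcosh (-(lor x y) / Real.sqrt (lor x x * lor y y))
    let L : (Fin 4 → ℝ) → (Fin 4 → ℝ) → ℝ := fun x y => 2 * Real.sinh (d x y / 2)
    (Real.cosh (d H₁ H₂) = 7/6 ∧ Real.cosh (d H₁ H₃) = 7/6 ∧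
      Real.cosh (d H₂ H₃) = 4/3) ∧
    (L H₁ H₂ = 1 / Real.sqrt 3 ∧ L H₁ H₃ = 1 / Real.sqrt 3 ∧
      L H₂ H₃ = Real.sqrt (2/3)) ∧
    (1 / Real.sqrt 3) ^ 2 + (1 / Real.sqrt 3) ^ 2 = Real.sqrt (2/3) ^ 2 ∧
    heronArea (1 / Real.sqrt 3) (1 / Real.sqrt 3) (Real.sqrt (2/3)) = 1/6 := by
  intro H₁ H₂ H₃ d L
  have sqrt_three_sq : √3 ^ 2 = 3 := sq_sqrt (by norm_num)
  have g₁₁ : lor H₁ H₁ = -1 ^ 2 := by simp only [H₁, lor_vecCons]; norm_num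
  have g₂₂ : lor H₂ H₂ = -(6 / 7) ^ 2 := by
    simp only [H₂, lor_vecCons]
    linear_combination (4 / 49) * sqrt_three_sq
  have g₃₃ : lor H₃ H₃ = -(6 / 7) ^ 2 := by
    simp only [H₃, lor_vecCons]
    linear_combination (4 / 49) * sqrt_three_sq
  have d₁₂ : d H₁ H₂ = Real.arcosh (7 / 6) := by
    simp only [d, arcosh_eq_real_arcosh, neg_lor_div_sqrt_eq zero_le_one (by norm_num) g₁₁ g₂₂]
    simp only [H₁, H₂, lor_vecCons]; norm_num
  have d₁₃ : d H₁ H₃ = Real.arcosh (7 / 6) := by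
    simp only [d, arcosh_eq_real_arcosh, neg_lor_div_sqrt_eq zero_le_one (by norm_num) g₁₁ g₃₃]
    simp only [H₁, H₃, lor_vecCons]; norm_num
  have d₂₃ : d H₂ H₃ = Real.arcosh (4 / 3) := by
    simp only [d, arcosh_eq_real_arcosh, neg_lor_div_sqrt_eq (by norm_num) (by norm_num) g₂₂ g₃₃]
    simp only [H₂, H₃, lor_vecCons]; norm_num
  have pythagoras : (1 / √3) ^ 2 + (1 / √3) ^ 2 = √(2 / 3) ^ 2 := by
    rw [div_pow, sqrt_three_sq, sq_sqrt (by norm_num)]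
    norm_num
  refine ⟨⟨?_, ?_, ?_⟩, ⟨?_, ?_, ?_⟩, pythagoras, ?_⟩
  · rw [d₁₂, cosh_arcosh (by norm_num)]
  · rw [d₁₃, cosh_arcosh (by norm_num)]
  · rw [d₂₃, cosh_arcosh (by norm_num)]
  · simp only [L]; rw [d₁₂, two_mul_sinh_half_arcosh (by norm_num)]; norm_num [sqrt_inv]
  · simp only [L]; rw [d₁₃, two_mul_sinh_half_arcosh (by norm_num)]; norm_num [sqrt_inv]
  · simp only [L]; rw [d₂₃, two_mul_sinh_half_arcosh (by norm_num)]; norm_num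
  · rw [heronArea_of_sq_add_sq (by positivity) (by positivity) pythagoras, ← sq, div_pow,
      sqrt_three_sq]
    norm_num
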